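/- arXiv:2504.10865 — 2 statements merged into one kernel-verified Lean document; each statement's English description precedes it below -/
import Mathlib

section
/- Let P be an n×n row-stochastic matrix with stationary distribution μ (a row vector with μP = μ, μ𝟙 = 1), and let P' be another row-stochastic matrix with stationary distribution μ'. If the spectral radius of P − 𝟙μ is less than 1, then μ'ᵀ − μᵀ = μ'ᵀ(P' − P)(I − P + 𝟙μᵀ)^{-1}, and in particular ‖μ' − μ‖₁ ≤ K‖P' − P‖₁ for a constant K depending only on P and μ. -/
open Matrix Finset

/-- The induced matrix 1-norm (maximum absolute column sum). -/
noncomputable def matOneNorm {n : ℕ} (M : Matrix (Fin n) (Fin n) ℝ) : ℝ :=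
  ⨆ j, ∑ i, |M i j|

/-!
Put `A = I - P + 𝟙μ`. Since `ρ(P - 𝟙μ) < 1`, the number `1` is not an eigenvalue of `P - 𝟙μ`,
so `A` is invertible. For any probability vector `ν` stationary for `Q` we have `ν𝟙μ = μ`, and
with `μP = μ` and `νQ = ν` this gives `(ν - μ)A = ν(Q - P)`; multiplying by `A⁻¹` yields the
perturbation identity. Each entry of `ν(Q - P)` is bounded by a column sum of `|Q - P|`, hence
`‖ν - μ‖₁ ≤ K ‖Q - P‖₁` with `K` the sum of the absolute values of the entries of `A⁻¹`.
-/

namespace Matrix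

variable {ι : Type*} [Fintype ι]

theorem isUnit_det_one_sub_of_spectrum_norm_lt_one [DecidableEq ι] (M : Matrix ι ι ℝ)
    (h : ∀ z ∈ spectrum ℂ (M.map (fun x : ℝ => (x : ℂ))), ‖z‖ < 1) :
    IsUnit (1 - M).det := by
  by_contra hM
  have hmap : algebraMap ℂ (Matrix ι ι ℂ) 1 - M.map (fun x : ℝ => (x : ℂ)) =
      (algebraMap ℝ ℂ).mapMatrix (1 - M) := by
    rw [map_one, map_sub, map_one]
    rfl
  have h1 : (1 : ℂ) ∈ spectrum ℂ (M.map (fun x : ℝ => (x : ℂ))) := by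
    rw [spectrum.mem_iff, hmap, isUnit_iff_isUnit_det, ← RingHom.map_det, isUnit_map_iff]
    exact hM
  simpa using h 1 h1

section CommRing

variable {R : Type*} [CommRing R]

theorem vecMul_of_const_row {ν : ι → R} (hν : ∑ i, ν i = 1) (μ : ι → R) :
    ν ᵥ* (of fun _ j => μ j) = μ := by
  funext j
  simp [vecMul, dotProduct, ← Finset.sum_mul, hν]

variable [DecidableEq ι] {P Q : Matrix ι ι R} {μ ν : ι → R}

theorem sub_vecMul_one_sub_add_of_const_row (hμ1 : ∑ i, μ i = 1) (hμ : μ ᵥ* P = μ)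
    (hν1 : ∑ i, ν i = 1) (hν : ν ᵥ* Q = ν) :
    (ν - μ) ᵥ* (1 - P + of fun _ j => μ j) = ν ᵥ* (Q - P) := by
  simp only [sub_vecMul, vecMul_add, vecMul_sub, vecMul_one, vecMul_of_const_row hν1,
    vecMul_of_const_row hμ1, hμ, hν]
  abel

theorem sub_eq_vecMul_inv_of_stationary (hA : IsUnit (1 - P + of fun _ j => μ j).det)
    (hμ1 : ∑ i, μ i = 1) (hμ : μ ᵥ* P = μ) (hν1 : ∑ i, ν i = 1) (hν : ν ᵥ* Q = ν) :
    ν - μ = (ν ᵥ* (Q - P)) ᵥ* (1 - P + of fun _ j => μ j)⁻¹ := by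
  rw [← sub_vecMul_one_sub_add_of_const_row hμ1 hμ hν1 hν, vecMul_vecMul,
    mul_nonsing_inv _ hA, vecMul_one]

end CommRing

theorem sum_abs_vecMul_le {κ : Type*} [Fintype κ] {w : ι → ℝ} {c : ℝ} (M : Matrix ι κ ℝ) (hw : ∀ i, |w i| ≤ c) :
    ∑ j, |(w ᵥ* M) j| ≤ c * ∑ i, ∑ j, |M i j| := by
  calc ∑ j, |(w ᵥ* M) j| ≤ ∑ j, ∑ i, |w i| * |M i j| :=
        Finset.sum_le_sum fun j _ => by
          simpa only [vecMul, dotProduct, abs_mul] using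
            Finset.abs_sum_le_sum_abs (fun i => w i * M i j) Finset.univ
    _ ≤ ∑ j, ∑ i, c * |M i j| := by gcongr with j _ i _; exact hw i
    _ = c * ∑ i, ∑ j, |M i j| := by rw [Finset.sum_comm, Finset.mul_sum]; simp only [Finset.mul_sum]

end Matrix

theorem sum_abs_le_matOneNorm {n : ℕ} (M : Matrix (Fin n) (Fin n) ℝ) (j : Fin n) :
    ∑ i, |M i j| ≤ matOneNorm M :=
  le_ciSup (f := fun j => ∑ i, |M i j|) (Set.finite_range _).bddAbove j

theorem abs_vecMul_le_matOneNorm {n : ℕ} {ν : Fin n → ℝ} (hν0 : ∀ i, 0 ≤ ν i)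
    (hν1 : ∑ i, ν i = 1) (M : Matrix (Fin n) (Fin n) ℝ) (j : Fin n) :
    |(ν ᵥ* M) j| ≤ matOneNorm M := by
  have hν_le_one (i : Fin n) : ν i ≤ 1 :=
    hν1 ▸ Finset.single_le_sum (fun k _ => hν0 k) (Finset.mem_univ i)
  calc |(ν ᵥ* M) j| ≤ ∑ i, |ν i * M i j| :=
        Finset.abs_sum_le_sum_abs (fun i => ν i * M i j) Finset.univ
    _ ≤ ∑ i, |M i j| := Finset.sum_le_sum fun i _ => by
        rw [abs_mul, abs_of_nonneg (hν0 i)]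
        exact mul_le_of_le_one_left (abs_nonneg _) (hν_le_one i)
    _ ≤ matOneNorm M := sum_abs_le_matOneNorm M j

theorem stmt11_general {n : ℕ} (P P' : Matrix (Fin n) (Fin n) ℝ) (μ μ' : Fin n → ℝ)
    (hμ1 : ∑ i, μ i = 1) (hμ : μ ᵥ* P = μ)
    (hμ'1 : ∑ i, μ' i = 1) (hμ' : μ' ᵥ* P' = μ')
    (hρ : ∀ z ∈ spectrum ℂ
        ((P - Matrix.of fun _ j => μ j).map (fun x : ℝ => (x : ℂ))),
      ‖z‖ < 1) :
    μ' - μ =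
      (μ' ᵥ* (P' - P)) ᵥ* (1 - P + Matrix.of fun _ j => μ j)⁻¹ ∧
    ∃ K : ℝ, ∀ (Q : Matrix (Fin n) (Fin n) ℝ) (ν : Fin n → ℝ),
      (∀ i j, 0 ≤ Q i j) → (∀ i, ∑ j, Q i j = 1) →
      (∀ i, 0 ≤ ν i) → (∑ i, ν i = 1) → ν ᵥ* Q = ν →
      ∑ i, |ν i - μ i| ≤ K * matOneNorm (Q - P) := by
  set A : Matrix (Fin n) (Fin n) ℝ := 1 - P + Matrix.of fun _ j => μ j
  have hA : IsUnit A.det := by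
    simpa only [A, sub_add] using isUnit_det_one_sub_of_spectrum_norm_lt_one _ hρ
  refine ⟨sub_eq_vecMul_inv_of_stationary hA hμ1 hμ hμ'1 hμ', ∑ i, ∑ j, |A⁻¹ i j|, ?_⟩
  intro Q ν _ _ hν0 hν1 hνQ
  calc ∑ i, |ν i - μ i| = ∑ i, |((ν ᵥ* (Q - P)) ᵥ* A⁻¹) i| := by
        rw [← sub_eq_vecMul_inv_of_stationary hA hμ1 hμ hν1 hνQ]
        rfl
    _ ≤ matOneNorm (Q - P) * ∑ i, ∑ j, |A⁻¹ i j| :=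
        sum_abs_vecMul_le _ (abs_vecMul_le_matOneNorm hν0 hν1 _)
    _ = _ := mul_comm _ _

/-- Perturbation identity and bound for stationary distributions of
row-stochastic matrices: if `ρ(P - 𝟙μ) < 1` then
`μ' - μ = μ'(P' - P)(I - P + 𝟙μ)⁻¹`, and
`‖μ' - μ‖₁ ≤ K ‖P' - P‖₁` for a constant `K` depending only on `P` and `μ`. -/
theorem stmt11 {n : ℕ} (P P' : Matrix (Fin n) (Fin n) ℝ) (μ μ' : Fin n → ℝ)
    (hP0 : ∀ i j, 0 ≤ P i j) (hP1 : ∀ i, ∑ j, P i j = 1)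
    (hP'0 : ∀ i j, 0 ≤ P' i j) (hP'1 : ∀ i, ∑ j, P' i j = 1)
    (hμ0 : ∀ i, 0 ≤ μ i) (hμ1 : ∑ i, μ i = 1) (hμ : μ ᵥ* P = μ)
    (hμ'0 : ∀ i, 0 ≤ μ' i) (hμ'1 : ∑ i, μ' i = 1) (hμ' : μ' ᵥ* P' = μ')
    (hρ : ∀ z ∈ spectrum ℂ
        ((P - Matrix.of fun _ j => μ j).map (fun x : ℝ => (x : ℂ))),
      ‖z‖ < 1) :
    μ' - μ =
      (μ' ᵥ* (P' - P)) ᵥ* (1 - P + Matrix.of fun _ j => μ j)⁻¹ ∧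
    ∃ K : ℝ, ∀ (Q : Matrix (Fin n) (Fin n) ℝ) (ν : Fin n → ℝ),
      (∀ i j, 0 ≤ Q i j) → (∀ i, ∑ j, Q i j = 1) →
      (∀ i, 0 ≤ ν i) → (∑ i, ν i = 1) → ν ᵥ* Q = ν →
      ∑ i, |ν i - μ i| ≤ K * matOneNorm (Q - P) :=
  stmt11_general P P' μ μ' hμ1 hμ hμ'1 hμ' hρ
end

section
/- Consider the asynchronous tabular Q-learning map F(Q) = D_d (R + γ P Π_{π_Q} Q − Q) on ℝ^{|S||A|}, where Π_{π_Q}Q applies the max over actions: (P Π_{π_Q} Q)_{(s,a)} = Σ_{s'} P(s'|s,a) max_u Q(s',u). Then F is one-sided Lipschitz in the infinity-norm sense with constant (γ−1)d_min < 0: for all Q, Q̃ and every index i achieving |Q_i − Q̃_i| = ‖Q − Q̃‖_∞, one has (Q − Q̃)_i (F(Q) − F(Q̃))_i ≤ (γ−1) d_min |(Q − Q̃)_i|². -/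
open Finset

lemma sup'_sub_sup'_le {A : Type*} [Fintype A] [Nonempty A] (f g : A → ℝ) (M : ℝ)
    (h : ∀ u, |f u - g u| ≤ M) :
    Finset.univ.sup' Finset.univ_nonempty f - Finset.univ.sup' Finset.univ_nonempty g ≤ M := by
  obtain ⟨u, -, hu⟩ := Finset.exists_mem_eq_sup' Finset.univ_nonempty f
  have h1 : f u - g u ≤ M := (abs_le.mp (h u)).2
  have h2 : g u ≤ Finset.univ.sup' Finset.univ_nonempty g :=
    Finset.le_sup' g (Finset.mem_univ u)
  linarith [hu ▸ le_refl (Finset.univ.sup' Finset.univ_nonempty f)]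

lemma abs_sup'_sub_sup'_le {A : Type*} [Fintype A] [Nonempty A] (f g : A → ℝ) (M : ℝ)
    (h : ∀ u, |f u - g u| ≤ M) :
    |Finset.univ.sup' Finset.univ_nonempty f - Finset.univ.sup' Finset.univ_nonempty g| ≤ M := by
  rw [abs_le]
  constructor
  · have := sup'_sub_sup'_le g f M (fun u => by rw [abs_sub_comm]; exact h u)
    linarith
  · exact sup'_sub_sup'_le f g M h

/-- The asynchronous tabular Q-learning map
`F(Q)(s,a) = d(s,a) (R(s,a) + γ ∑_{s'} P(s'|s,a) max_u Q(s',u) - Q(s,a))`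
is one-sided Lipschitz with constant `(γ - 1) d_min < 0` in the infinity-norm
sense: at any coordinate `i` achieving the sup norm of `Q - Q̃`,
`(Q - Q̃)_i (F(Q) - F(Q̃))_i ≤ (γ - 1) d_min |(Q - Q̃)_i|²`. -/
theorem stmt12 {S A : Type*} [Fintype S] [Fintype A] [Nonempty S] [Nonempty A]
    (γ : ℝ) (hγ0 : 0 < γ) (hγ1 : γ < 1)
    (d : S × A → ℝ) (dmin : ℝ) (hdmin : 0 < dmin) (hd : ∀ sa, dmin ≤ d sa)
    (P : S × A → S → ℝ) (hP0 : ∀ sa s', 0 ≤ P sa s')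
    (hP1 : ∀ sa, ∑ s', P sa s' = 1)
    (R : S × A → ℝ)
    (F : (S × A → ℝ) → S × A → ℝ)
    (hF : ∀ Q sa, F Q sa =
      d sa * (R sa + γ * ∑ s', P sa s' *
        (Finset.univ.sup' Finset.univ_nonempty fun u : A => Q (s', u)) - Q sa)) :
    ∀ Q Q' : S × A → ℝ, ∀ i : S × A,
      (∀ j, |Q j - Q' j| ≤ |Q i - Q' i|) →
      (Q i - Q' i) * (F Q i - F Q' i) ≤ (γ - 1) * dmin * |Q i - Q' i| ^ 2 := by
  intro Q Q' i hmax
  set Δ := Q i - Q' i with hΔ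
  set M := fun s' => (Finset.univ.sup' Finset.univ_nonempty fun u : A => Q (s', u)) -
    (Finset.univ.sup' Finset.univ_nonempty fun u : A => Q' (s', u)) with hM
  have hMbd : ∀ s', |M s'| ≤ |Δ| := fun s' =>
    abs_sup'_sub_sup'_le _ _ _ (fun u => hmax (s', u))
  have hdiff : F Q i - F Q' i = d i * (γ * ∑ s', P i s' * M s' - Δ) := by
    rw [hF, hF]
    simp only [hM, mul_sub, Finset.sum_sub_distrib, hΔ]
    ring
  rw [hdiff, hΔ] at *
  have key : ∀ s', (Q i - Q' i) * (P i s' * M s') ≤ P i s' * |Q i - Q' i| ^ 2 := by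
    intro s'
    have h1 : (Q i - Q' i) * M s' ≤ |Q i - Q' i| * |M s'| := by
      calc (Q i - Q' i) * M s' ≤ |(Q i - Q' i) * M s'| := le_abs_self _
        _ = |Q i - Q' i| * |M s'| := abs_mul _ _
    have h2 : |Q i - Q' i| * |M s'| ≤ |Q i - Q' i| ^ 2 := by
      have := hMbd s'
      nlinarith [abs_nonneg (Q i - Q' i)]
    nlinarith [hP0 i s']
  have hsum : (Q i - Q' i) * ∑ s', P i s' * M s' ≤ |Q i - Q' i| ^ 2 := by
    rw [Finset.mul_sum]
    calc ∑ s', (Q i - Q' i) * (P i s' * M s') ≤ ∑ s' : S, P i s' * |Q i - Q' i| ^ 2 :=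
          Finset.sum_le_sum fun s' _ => key s'
      _ = |Q i - Q' i| ^ 2 := by rw [← Finset.sum_mul, hP1 i, one_mul]
  have hsq : (Q i - Q' i) ^ 2 = |Q i - Q' i| ^ 2 := (sq_abs _).symm
  have hdi : dmin ≤ d i := hd i
  have habs : 0 ≤ |Q i - Q' i| ^ 2 := by positivity
  -- (Q-Q')ᵢ * (d i * (γ * Σ - (Q-Q')ᵢ)) = d i * (γ * ((Q-Q')ᵢ * Σ) - (Q-Q')ᵢ²)
  have expand : (Q i - Q' i) * (d i * (γ * ∑ s', P i s' * M s' - (Q i - Q' i)))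
      = d i * (γ * ((Q i - Q' i) * ∑ s', P i s' * M s') - (Q i - Q' i) ^ 2) := by ring
  rw [expand, hsq]
  have step1 : γ * ((Q i - Q' i) * ∑ s', P i s' * M s') - |Q i - Q' i| ^ 2
      ≤ (γ - 1) * |Q i - Q' i| ^ 2 := by nlinarith
  have hdipos : 0 < d i := lt_of_lt_of_le hdmin hdi
  calc d i * (γ * ((Q i - Q' i) * ∑ s', P i s' * M s') - |Q i - Q' i| ^ 2)
      ≤ d i * ((γ - 1) * |Q i - Q' i| ^ 2) := by nlinarith
    _ ≤ (γ - 1) * dmin * |Q i - Q' i| ^ 2 := by nlinarith [mul_nonneg (sub_nonneg.mpr hdi) habs]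
end
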